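/- Under the side conditions p∘i = id, H∘i = 0, p∘H = 0, H² = 0 for homotopy data (i, p, H) between a unital A∞-algebra (A,m) and a complex (V,d), and assuming i(e_V) = e_A, the transferred A∞-operations η_k of the homological perturbation lemma satisfy η_{k+1}(v₁,...,e_V,...,v_k) = p(m_{k+1}(i(v₁),...,e_A,...,i(v_k))); in particular e_V is a strict unit for the transferred structure. -/

import Mathlib

/-- Planar rooted trees: a tree is a leaf or an (internal) node with an ordered list
of subtrees. -/
inductive PTree : Type
  | leaf : PTree
  | node : List PTree → PTree

mutual
  /-- Number of leaves of a planar tree. -/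
  def PTree.nleaves : PTree → ℕ
    | .leaf => 1
    | .node ts => PTree.nleavesL ts
  /-- Number of leaves of a list of planar trees. -/
  def PTree.nleavesL : List PTree → ℕ
    | [] => 0
    | t :: ts => t.nleaves + PTree.nleavesL ts
end

mutual
  /-- The trees appearing in the homological perturbation lemma for a flat A∞-algebra:
  every internal vertex has valency at least `2`. -/
  def PTree.good : PTree → Bool
    | .leaf => true
    | .node ts => decide (2 ≤ ts.length) && PTree.goodL ts
  def PTree.goodL : List PTree → Bool
    | [] => true
    | t :: ts => t.good && PTree.goodL ts
end

section Eval

variable {V A : Type*} [AddCommGroup A]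
variable (m : ∀ k : ℕ, (Fin k → A) → A) (iV : V → A) (Hh : A → A)

mutual
  /-- Evaluation of a tree as a flow chart: `m_{val(v)}` at each internal vertex, `H` at
  each internal edge, `i` at the leaves (no `p` or `H` applied at the root). -/
  noncomputable def PTree.evalT : PTree → List V → A
    | .leaf, vs => (match vs with | [] => 0 | v :: _ => iV v)
    | .node ts, vs => m ts.length (fun j => (PTree.evalChildren ts vs).getD j.val 0)
  /-- Evaluation of the children of a vertex, applying `H` on internal edges. -/
  noncomputable def PTree.evalChildren : List PTree → List V → List A
    | [], _ => []
    | .leaf :: ts, vs =>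
        (match vs with | [] => 0 | v :: _ => iV v) :: PTree.evalChildren ts (vs.drop 1)
    | .node cs :: ts, vs =>
        Hh (PTree.evalT (.node cs) (vs.take (PTree.nleavesL cs))) ::
          PTree.evalChildren ts (vs.drop (PTree.nleavesL cs))
end

end Eval

/-! Let the unit sit at the leaf `ℓ`. If the parent vertex of `ℓ` has valency `≠ 2`, strict
unitality kills the operation there; if it has valency `2`, then `m₂(e, x) = x` and
`m₂(x, e) = ±x` collapse the vertex onto its other input `x`, which is `i v` or `H y`. If that
vertex is not the root, the edge leaving it carries `H(±x) = 0` (by `H∘i = 0`, `H² = 0`), and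
multilinearity makes the whole tree vanish. So only the trees in which `ℓ` hangs off the root
survive: the corolla gives `p(m_{k+1}(…, e_A, …))`, and any other tree evaluates to `±H y`,
which `p∘H = 0` kills. -/

namespace PTree

@[simp] theorem nleaves_leaf : leaf.nleaves = 1 := by rw [nleaves]
@[simp] theorem nleaves_node (ts : List PTree) : (node ts).nleaves = nleavesL ts := by
  rw [nleaves]
@[simp] theorem nleavesL_nil : nleavesL [] = 0 := by rw [nleavesL]
@[simp] theorem nleavesL_cons (t : PTree) (ts : List PTree) :
    nleavesL (t :: ts) = t.nleaves + nleavesL ts := by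
  rw [nleavesL]

@[simp] theorem good_leaf : leaf.good = true := by rw [good]
@[simp] theorem good_node (ts : List PTree) :
    (node ts).good = (decide (2 ≤ ts.length) && goodL ts) := by
  rw [good]
@[simp] theorem goodL_nil : goodL [] = true := by rw [goodL]
@[simp] theorem goodL_cons (t : PTree) (ts : List PTree) :
    goodL (t :: ts) = (t.good && goodL ts) := by
  rw [goodL]

theorem induction_mem {motive : PTree → Prop} (leaf : motive leaf)
    (node : ∀ ts, (∀ c ∈ ts, motive c) → motive (node ts)) : ∀ t, motive t
  | .leaf => leaf
  | .node ts => node ts fun c _ => induction_mem leaf node c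
termination_by t => t
decreasing_by simp_wf; have := List.sizeOf_lt_of_mem ‹c ∈ ts›; omega

theorem nleavesL_replicate_leaf (n : ℕ) : nleavesL (List.replicate n leaf) = n := by
  induction n with
  | zero => simp
  | succ n ih => simp [List.replicate_succ, ih, Nat.add_comm]

theorem goodL_replicate_leaf (n : ℕ) : goodL (List.replicate n leaf) = true := by
  induction n with
  | zero => simp
  | succ n ih => simp [List.replicate_succ, ih]

theorem exists_nleavesL_take_le_of_lt_nleavesL {ts : List PTree} {j : ℕ}
    (hj : j < nleavesL ts) : ∃ i : Fin ts.length,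
      nleavesL (ts.take i) ≤ j ∧ j < nleavesL (ts.take i) + ts[(i : ℕ)].nleaves := by
  induction ts generalizing j with
  | nil => simp at hj
  | cons t ts ih =>
    rw [nleavesL_cons] at hj
    by_cases hjt : j < t.nleaves
    · exact ⟨⟨0, by simp⟩, by simp, by simpa using hjt⟩
    · obtain ⟨i, h₁, h₂⟩ := ih (j := j - t.nleaves) (by omega)
      exact ⟨i.succ, by simp; omega, by simp; omega⟩

theorem nleavesL_eq_length_of_forall_leaf {ts : List PTree} (h : ∀ c ∈ ts, c = leaf) :
    nleavesL ts = ts.length := by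
  rw [List.eq_replicate_iff.2 ⟨rfl, h⟩, nleavesL_replicate_leaf, List.length_replicate]

section Eval

variable {V A : Type*} [AddCommGroup A]
variable (m : ∀ k : ℕ, (Fin k → A) → A) (iV : V → A) (Hh : A → A)

noncomputable def edgeVal : PTree → List V → A
  | leaf, L => evalT m iV Hh leaf L
  | node cs, L => Hh (evalT m iV Hh (node cs) (L.take (nleavesL cs)))

@[simp] theorem evalT_leaf_cons (v : V) (L : List V) : evalT m iV Hh leaf (v :: L) = iV v := by
  rw [evalT]

theorem evalT_node (ts : List PTree) (L : List V) :
    evalT m iV Hh (node ts) L = m ts.length (fun j => (evalChildren m iV Hh ts L).getD j 0) := by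
  rw [evalT]

@[simp] theorem evalChildren_cons (c : PTree) (ts : List PTree) (L : List V) :
    evalChildren m iV Hh (c :: ts) L =
      edgeVal m iV Hh c L :: evalChildren m iV Hh ts (L.drop c.nleaves) := by
  cases c <;> cases L <;> simp [evalChildren, edgeVal, evalT]

theorem getD_evalChildren (ts : List PTree) (L : List V) (i : Fin ts.length) :
    (evalChildren m iV Hh ts L).getD i 0 =
      edgeVal m iV Hh ts[(i : ℕ)] (L.drop (nleavesL (ts.take i))) := by
  induction ts generalizing L with
  | nil => exact i.elim0
  | cons t ts ih =>
    cases i using Fin.cases with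
    | zero => simp
    | succ i => simpa [List.drop_drop, Nat.add_comm] using ih (L.drop t.nleaves) i

theorem evalT_node_ofFn_of_forall_leaf {ts : List PTree} {n : ℕ} (f : Fin n → V)
    (hn : ts.length = n) (h : ∀ c ∈ ts, c = leaf) :
    evalT m iV Hh (node ts) (List.ofFn f) = m n (fun i => iV (f i)) := by
  subst hn
  rw [evalT_node]
  congr 1
  funext i
  have hi : ts[(i : ℕ)] = leaf := h _ (List.getElem_mem _)
  have hleaves : nleavesL (ts.take i) = i := by
    rw [nleavesL_eq_length_of_forall_leaf fun c hc => h c (List.mem_of_mem_take hc)]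
    simp
  rw [getD_evalChildren, hi, hleaves, edgeVal, List.drop_eq_getElem_cons (by simp),
    List.getElem_ofFn, evalT_leaf_cons]

end Eval
end PTree

section Operations

variable {A : Type*} [AddCommGroup A] {m : ∀ k : ℕ, (Fin k → A) → A}

def IsSlotwiseAdditive (m : ∀ k : ℕ, (Fin k → A) → A) : Prop :=
  ∀ (k : ℕ) (x : Fin k → A) (i : Fin k) (a b : A),
    m k (Function.update x i (a + b)) = m k (Function.update x i a) + m k (Function.update x i b)

theorem IsSlotwiseAdditive.eq_zero_of_apply_eq_zero (hm_add : IsSlotwiseAdditive m)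
    {k : ℕ} {x : Fin k → A} {i : Fin k} (hx : x i = 0) : m k x = 0 := by
  have h := hm_add k x i 0 0
  rwa [add_zero, ← hx, Function.update_eq_self, left_eq_add] at h

structure IsStrictUnit (m : ∀ k : ℕ, (Fin k → A) → A) (g : A → ℤ) (e : A) : Prop where
  m_two_left : ∀ a : A, m 2 ![e, a] = a
  m_two_right : ∀ a : A, m 2 ![a, e] = (Int.negOnePow (g a) : ℤ) • a
  m_eq_zero : ∀ (k : ℕ) (x : Fin k → A) (i : Fin k), k ≠ 2 → x i = e → m k x = 0

theorem IsStrictUnit.eq_zero_or_eq_zsmul {g : A → ℤ} {e : A} (he : IsStrictUnit m g e)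
    {n : ℕ} {x : Fin n → A} {i : Fin n} (hx : x i = e) :
    m n x = 0 ∨ n = 2 ∧ ∃ (s : ℤ) (j : Fin n), j ≠ i ∧ m n x = s • x j := by
  by_cases hn : n = 2
  · subst hn
    right
    refine ⟨rfl, ?_⟩
    have hx_eq : x = ![x 0, x 1] := by
      funext j; fin_cases j <;> rfl
    fin_cases i
    · refine ⟨1, 1, by decide, ?_⟩
      have hx₀ : x 0 = e := hx
      conv_lhs => rw [hx_eq, hx₀, he.m_two_left]
      rw [one_smul]
    · refine ⟨(g (x 0)).negOnePow, 0, by decide, ?_⟩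
      have hx₁ : x 1 = e := hx
      conv_lhs => rw [hx_eq, hx₁, he.m_two_right]
  · exact Or.inl (he.m_eq_zero n x i hn hx)

end Operations

namespace PTree

section StrictUnit

variable {V A : Type*} [AddCommGroup V] [AddCommGroup A] {m : ∀ k : ℕ, (Fin k → A) → A}
  {g : A → ℤ} {iV : V →+ A} {Hh : A →+ A} {eA : A} {eV : V}

theorem Hh_edgeVal_eq_zero (hHi : ∀ v : V, Hh (iV v) = 0) (hHH : ∀ a : A, Hh (Hh a) = 0)
    (c : PTree) (L : List V) : Hh (edgeVal m iV Hh c L) = 0 := by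
  cases c with
  | leaf => cases L <;> simp [edgeVal, evalT, hHi]
  | node cs => exact hHH _

theorem evalT_node_eq_zero_or_exists_unit_slot (hm_add : IsSlotwiseAdditive m)
    (hie : iV eV = eA) {ts : List PTree} {L : List V} {j : ℕ}
    (hj : j < nleavesL ts) (hL : L[j]? = some eV)
    (ih : ∀ c ∈ ts, ∀ (L' : List V) (j' : ℕ), j' < c.nleaves → L'[j']? = some eV →
      Hh (evalT m iV Hh c L') = 0) :
    evalT m iV Hh (node ts) L = 0 ∨
      ∃ i : Fin ts.length,
        ts[(i : ℕ)] = leaf ∧ (evalChildren m iV Hh ts L).getD i 0 = eA := by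
  obtain ⟨i, hi₁, hi₂⟩ := exists_nleavesL_take_le_of_lt_nleavesL hj
  have hslot := getD_evalChildren m iV Hh ts L i
  cases hc : ts[(i : ℕ)] with
  | leaf =>
    rw [hc, nleaves_leaf] at hi₂
    obtain ⟨hjL, hLj⟩ := List.getElem_of_getElem? hL
    have hdrop : L.drop (nleavesL (ts.take i)) = eV :: L.drop (j + 1) := by
      rw [show nleavesL (ts.take i) = j by omega, List.drop_eq_getElem_cons hjL, hLj]
    refine Or.inr ⟨i, hc, ?_⟩
    rw [hslot, hc, hdrop, edgeVal, evalT_leaf_cons, hie]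
  | node cs =>
    rw [hc, nleaves_node] at hi₂
    refine Or.inl (evalT_node m iV Hh ts L ▸ hm_add.eq_zero_of_apply_eq_zero (i := i) ?_)
    rw [hslot, hc, edgeVal]
    refine ih _ (hc ▸ List.getElem_mem _) _ (j - nleavesL (ts.take i)) (by simp; omega) ?_
    rw [List.getElem?_take_of_lt (by omega), List.getElem?_drop, Nat.add_sub_cancel' hi₁, hL]

theorem evalT_node_eq_zero_or_eq_zsmul_edgeVal (hm_add : IsSlotwiseAdditive m)
    (hunit : IsStrictUnit m g eA) (hie : iV eV = eA) {ts : List PTree} {L : List V} {j : ℕ}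
    (hj : j < nleavesL ts) (hL : L[j]? = some eV)
    (ih : ∀ c ∈ ts, ∀ (L' : List V) (j' : ℕ), j' < c.nleaves → L'[j']? = some eV →
      Hh (evalT m iV Hh c L') = 0) :
    evalT m iV Hh (node ts) L = 0 ∨
      ∃ (i i' : Fin ts.length) (s : ℤ), ts.length = 2 ∧ ts[(i : ℕ)] = leaf ∧ i' ≠ i ∧
        evalT m iV Hh (node ts) L =
          s • edgeVal m iV Hh ts[(i' : ℕ)] (L.drop (nleavesL (ts.take i'))) := by
  rcases evalT_node_eq_zero_or_exists_unit_slot hm_add hie hj hL ih with h | ⟨i, hi, hslot⟩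
  · exact Or.inl h
  rw [evalT_node]
  rcases hunit.eq_zero_or_eq_zsmul (x := fun i => (evalChildren m iV Hh ts L).getD i 0) hslot
    with h | ⟨h2, s, i', hi', h⟩
  · exact Or.inl h
  · exact Or.inr ⟨i, i', s, h2, hi, hi', by rw [h, getD_evalChildren]⟩

theorem Hh_evalT_eq_zero (hm_add : IsSlotwiseAdditive m) (hunit : IsStrictUnit m g eA)
    (hie : iV eV = eA) (hHi : ∀ v : V, Hh (iV v) = 0) (hHH : ∀ a : A, Hh (Hh a) = 0)
    (t : PTree) (L : List V) (j : ℕ) (hj : j < t.nleaves) (hL : L[j]? = some eV) :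
    Hh (evalT m iV Hh t L) = 0 := by
  induction t using induction_mem generalizing L j with
  | leaf => exact Hh_edgeVal_eq_zero (m := m) hHi hHH leaf L
  | node ts ih =>
    rw [nleaves_node] at hj
    rcases evalT_node_eq_zero_or_eq_zsmul_edgeVal hm_add hunit hie hj hL ih
      with h | ⟨_, _, s, -, -, -, h⟩
    · rw [h, map_zero]
    · rw [h, map_zsmul, Hh_edgeVal_eq_zero hHi hHH, smul_zero]

theorem pA_evalT_node_eq_zero (hm_add : IsSlotwiseAdditive m) (hunit : IsStrictUnit m g eA)
    (hie : iV eV = eA) (hHi : ∀ v : V, Hh (iV v) = 0) (hHH : ∀ a : A, Hh (Hh a) = 0)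
    {pA : A →+ V} (hpH : ∀ a : A, pA (Hh a) = 0) {ts : List PTree}
    (hts : ∃ c ∈ ts, c ≠ leaf) {L : List V} {j : ℕ} (hj : j < nleavesL ts)
    (hL : L[j]? = some eV) :
    pA (evalT m iV Hh (node ts) L) = 0 := by
  rcases evalT_node_eq_zero_or_eq_zsmul_edgeVal hm_add hunit hie hj hL
      (fun c _ => Hh_evalT_eq_zero hm_add hunit hie hHi hHH c)
    with h | ⟨i, i', s, h2, hi, hi', h⟩
  · rw [h, map_zero]
  have hi'_node : ts[(i' : ℕ)] ≠ leaf := by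
    intro hi'_leaf
    obtain ⟨c, hc, hc_leaf⟩ := hts
    obtain ⟨k, hk, rfl⟩ := List.getElem_of_mem hc
    have hi'_val := Fin.val_ne_of_ne hi'
    obtain rfl | rfl : k = i ∨ k = i' := by omega
    exacts [hc_leaf hi, hc_leaf hi'_leaf]
  rw [h, map_zsmul]
  cases hc : ts[(i' : ℕ)] with
  | leaf => exact absurd hc hi'_node
  | node cs => rw [edgeVal, hpH, smul_zero]

end StrictUnit

end PTree

/-- Under the side conditions `p∘i = id`, `H∘i = 0`, `p∘H = 0`, `H² = 0` for homotopy
data `(i, p, H)` between a unital A∞-algebra `(A, m)` and a complex `(V, d)`, and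
assuming `i(e_V) = e_A`, the transferred A∞-operations
`η_k = Σ_{T} η_T` (sums over planar trees with all internal valencies `≥ 2`,
assigning `m_{val(v)}` to internal vertices, `H` to internal edges, `i` to leaves and
`p` to the root) satisfy
`η_{k+1}(v₁, …, e_V, …, v_k) = p(m_{k+1}(i(v₁), …, e_A, …, i(v_k)))`;
in particular `e_V` is a strict unit for the transferred structure. -/
theorem stmt9 {V A : Type*} [AddCommGroup V] [AddCommGroup A]
    (m : ∀ k : ℕ, (Fin k → A) → A) (g : A → ℤ)
    (iV : V →+ A) (pA : A →+ V) (Hh : A →+ A) (dV : V →+ V)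
    (eA : A) (eV : V)
    -- `m` is multilinear (additive in each slot)
    (hm_add : ∀ (k : ℕ) (x : Fin k → A) (i : Fin k) (a b : A),
      m k (Function.update x i (a + b)) =
        m k (Function.update x i a) + m k (Function.update x i b))
    -- `e_A` is a strict unit of `(A, m)`
    (hunit_l : ∀ a : A, m 2 ![eA, a] = a)
    (hunit_r : ∀ a : A, m 2 ![a, eA] = (Int.negOnePow (g a) : ℤ) • a)
    (hunit_k : ∀ (k : ℕ) (x : Fin k → A) (i : Fin k), k ≠ 2 → x i = eA → m k x = 0)
    -- homotopy data
    (hie : iV eV = eA)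
    (hhtpy : ∀ a : A, iV (pA a) - a = m 1 ![Hh a] + Hh (m 1 ![a]))
    (hichain : ∀ v : V, iV (dV v) = m 1 ![iV v])
    (hpchain : ∀ a : A, dV (pA a) = pA (m 1 ![a]))
    -- side conditions
    (hpi : ∀ v : V, pA (iV v) = v)
    (hHi : ∀ v : V, Hh (iV v) = 0)
    (hpH : ∀ a : A, pA (Hh a) = 0)
    (hHH : ∀ a : A, Hh (Hh a) = 0)
    -- the (finite) set of trees with `k+1` leaves defining `η_{k+1}`
    (k : ℕ) (𝒯 : Finset PTree)
    (h𝒯 : ∀ t : PTree, t ∈ 𝒯 ↔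
      (t.good = true ∧ t.nleaves = k + 1 ∧ ∃ ts, t = PTree.node ts))
    (vs : Fin k → V) (pos : Fin (k + 1)) :
    (∑ t ∈ 𝒯, pA (PTree.evalT m (⇑iV) (⇑Hh) t (List.ofFn (Fin.insertNth pos eV vs)))) =
      pA (m (k + 1) (Fin.insertNth pos eA (fun j => iV (vs j)))) ∧
    (k ≠ 1 →
      (∑ t ∈ 𝒯, pA (PTree.evalT m (⇑iV) (⇑Hh) t (List.ofFn (Fin.insertNth pos eV vs)))) = 0) := by
  have hunit : IsStrictUnit m g eA := ⟨hunit_l, hunit_r, hunit_k⟩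
  set L := List.ofFn (Fin.insertNth pos eV vs)
  have hL : L[(pos : ℕ)]? = some eV := by
    simp only [L, List.getElem?_ofFn, pos.isLt, dif_pos, Fin.eta, Fin.insertNth_apply_same]
  have hcorolla : PTree.evalT m iV Hh (.node (List.replicate (k + 1) .leaf)) L =
      m (k + 1) (Fin.insertNth pos eA fun j => iV (vs j)) := by
    rw [PTree.evalT_node_ofFn_of_forall_leaf m iV Hh _ List.length_replicate
      fun c => List.eq_of_mem_replicate]
    congr 1
    exact (Fin.insertNth_eq_iff.2 ⟨by simp [hie], by ext; simp [Fin.removeNth]⟩).symm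
  have hsum : ∑ t ∈ 𝒯, pA (PTree.evalT m iV Hh t L) =
      pA (m (k + 1) (Fin.insertNth pos eA fun j => iV (vs j))) := by
    rw [← hcorolla]
    refine Finset.sum_eq_single _ (fun t ht hne => ?_) fun hnot => ?_
    · obtain ⟨-, hn, ts, rfl⟩ := (h𝒯 t).1 ht
      rw [PTree.nleaves_node] at hn
      refine PTree.pA_evalT_node_eq_zero hm_add hunit hie hHi hHH hpH ?_ (hn.symm ▸ pos.isLt) hL
      by_contra! hleaf
      rw [List.eq_replicate_iff.2 ⟨rfl, hleaf⟩,
        ← PTree.nleavesL_eq_length_of_forall_leaf hleaf, hn] at hne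
      exact hne rfl
    · -- the corolla is good unless `k = 0`, and then `m₁(e_A) = 0`
      rw [hcorolla, hunit_k _ _ pos ?_ (by simp), map_zero]
      intro hk
      exact hnot ((h𝒯 _).2 ⟨by simp [hk], by simp [PTree.nleavesL_replicate_leaf], _, rfl⟩)
  refine ⟨hsum, fun hk => ?_⟩
  rw [hsum, hunit_k (k + 1) _ pos (by omega) (by simp), map_zero]
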